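/- Optimal transport avoids dead ends (strong locality): let (X, Q, π) be a Markov triple, Λ an admissible mean, and suppose X = X₁ ∪ X₂ with X₁ ∩ X₂ = {∗} and Q(x,y) = Q(y,x) = 0 whenever x ∈ X₁∖{∗} and y ∈ X₂∖{∗}. If (μ, V) ∈ CE₁(μ₀, μ₁) is a minimiser, i.e. ∫₀¹ 𝒜(μ_t, V_t) dt = W(μ₀, μ₁)², and the supports of μ₀ and μ₁ are contained in X₁, then the support of μ_t is contained in X₁ for all t ∈ [0,1]. -/

import Mathlib

open MeasureTheory
open scoped ENNReal

section Prelude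

variable {X : Type*}

/-- A probability measure on a finite set, identified with its density. -/
def IsProb [Fintype X] (μ : X → ℝ) : Prop :=
  (∀ x, 0 ≤ μ x) ∧ ∑ x, μ x = 1

/-- An admissible mean in the sense of Erbar–Maas–Wirth. -/
structure AdmissibleMean (Λ : ℝ → ℝ → ℝ) : Prop where
  contOn : ContinuousOn (fun p : ℝ × ℝ => Λ p.1 p.2) (Set.Ici 0 ×ˢ Set.Ici 0)
  smoothOn : ContDiffOn ℝ (⊤ : ℕ∞) (fun p : ℝ × ℝ => Λ p.1 p.2) (Set.Ioi 0 ×ˢ Set.Ioi 0)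
  symm : ∀ s t, Λ s t = Λ t s
  homog : ∀ c s t, 0 ≤ c → 0 ≤ s → 0 ≤ t → Λ (c * s) (c * t) = c * Λ s t
  mono : ∀ s s' t, 0 ≤ s → s ≤ s' → 0 ≤ t → Λ s t ≤ Λ s' t
  concave : ConcaveOn ℝ (Set.Ici 0 ×ˢ Set.Ici 0) (fun p : ℝ × ℝ => Λ p.1 p.2)
  nonneg : ∀ s t, 0 ≤ s → 0 ≤ t → 0 ≤ Λ s t
  normalized : Λ 1 1 = 1

/-- The convex lsc integrand `A(s,t,w)`, with values in `[0,∞]`. -/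
noncomputable def Afun (Λ : ℝ → ℝ → ℝ) (s t w : ℝ) : ℝ≥0∞ :=
  if 0 < s ∧ 0 < t then ENNReal.ofReal (w ^ 2 / Λ s t)
  else if w = 0 ∧ 0 ≤ s ∧ 0 ≤ t then 0
  else ⊤

/-- The action `𝒜(μ, V)`. -/
noncomputable def action [Fintype X] (Λ : ℝ → ℝ → ℝ) (Q : X → X → ℝ)
    (μ : X → ℝ) (V : X → X → ℝ) : ℝ≥0∞ :=
  (∑ x, ∑ y, Afun Λ (μ x * Q x y) (μ y * Q y x) (V x y)) / 2

/-- The pairing `⟨f, μ⟩ = ∑ₓ f(x) μ(x)`. -/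
def dotp [Fintype X] (f μ : X → ℝ) : ℝ := ∑ x, f x * μ x

/-- The squared discrete gradient norm `‖∇ψ‖²_μ`. -/
noncomputable def gradSq [Fintype X] (Λ : ℝ → ℝ → ℝ) (Q : X → X → ℝ)
    (μ ψ : X → ℝ) : ℝ :=
  (1 / 2) * ∑ x, ∑ y, Λ (μ x * Q x y) (μ y * Q y x) * (ψ y - ψ x) ^ 2

/-- `C¹` Hamilton–Jacobi subsolutions on `[0, T]`. -/
def IsHJ [Fintype X] (Λ : ℝ → ℝ → ℝ) (Q : X → X → ℝ) (T : ℝ) (φ : ℝ → X → ℝ) : Prop :=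
  ∃ φ' : ℝ → X → ℝ,
    (∀ x, ContinuousOn (fun t => φ' t x) (Set.Icc 0 T)) ∧
    (∀ x, ∀ t ∈ Set.Icc (0 : ℝ) T,
      HasDerivWithinAt (fun s => φ s x) (φ' t x) (Set.Icc 0 T) t) ∧
    (∀ t ∈ Set.Icc (0 : ℝ) T, ∀ μ : X → ℝ, IsProb μ →
      dotp (φ' t) μ + (1 / 2) * gradSq Λ Q μ (φ t) ≤ 0)

/-- The continuity equation on the time interval `[0,1]`. -/
def IsCE1 [Fintype X] (μ0 μ1 : X → ℝ) (μ : ℝ → X → ℝ) (V : ℝ → X → X → ℝ) : Prop :=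
  (∀ x, ContinuousOn (fun t => μ t x) (Set.Icc 0 1)) ∧
  (∀ x y, IntervalIntegrable (fun s => V s x y) volume 0 1) ∧
  (∀ t ∈ Set.Icc (0 : ℝ) 1, IsProb (μ t)) ∧
  μ 0 = μ0 ∧ μ 1 = μ1 ∧
  (∀ x, ∀ t ∈ Set.Icc (0 : ℝ) 1,
    μ t x = μ0 x - ∫ s in (0 : ℝ)..t, (1 / 2) * ∑ y, (V s x y - V s y x))

/-- Total action of a curve. -/
noncomputable def curveAction [Fintype X] (Λ : ℝ → ℝ → ℝ) (Q : X → X → ℝ)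
    (μ : ℝ → X → ℝ) (V : ℝ → X → X → ℝ) : ℝ≥0∞ :=
  ∫⁻ t in Set.Icc (0 : ℝ) 1, action Λ Q (μ t) (V t)

/-- The squared discrete transport distance `W(μ0, μ1)²`. -/
noncomputable def Wsq [Fintype X] (Λ : ℝ → ℝ → ℝ) (Q : X → X → ℝ)
    (μ0 μ1 : X → ℝ) : ℝ≥0∞ :=
  ⨅ (μ : ℝ → X → ℝ) (V : ℝ → X → X → ℝ) (_ : IsCE1 μ0 μ1 μ V), curveAction Λ Q μ V

/-- A Markov triple: nonnegative irreducible rates, vanishing on the diagonal,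
reversible w.r.t. the strictly positive probability measure `pm`. -/
def IsMarkovTriple [Fintype X] (Q : X → X → ℝ) (pm : X → ℝ) : Prop :=
  (∀ x y, 0 ≤ Q x y) ∧ (∀ x, Q x x = 0) ∧
  (∀ x y, Relation.ReflTransGen (fun a b => 0 < Q a b) x y) ∧
  IsProb pm ∧ (∀ x, 0 < pm x) ∧ (∀ x y, pm x * Q x y = pm y * Q y x)

/-- A subset is connected if any two of its points are joined by a path inside it
along which `Q` is positive. -/
def IsConnectedSubset (Q : X → X → ℝ) (Y : Set X) : Prop :=
  ∀ y ∈ Y, ∀ y' ∈ Y, Relation.ReflTransGen (fun a b => b ∈ Y ∧ 0 < Q a b) y y'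

/-- `T` is a retraction of `X` onto `Y`. -/
def IsRetraction [Fintype X] [DecidableEq X] (Q : X → X → ℝ) (Y : Set X) (T : X → X) : Prop :=
  (∀ x, T x ∈ Y) ∧ (∀ y ∈ Y, T y = y) ∧
  ∀ y ∈ Y, ∀ y' ∈ Y, y ≠ y' → ∀ x, T x = y →
    (∑ x' ∈ Finset.univ.filter (fun x' => T x' = y'), Q x x') ≤ Q y y'

/-- `Y` has the retraction property. -/
def HasRetractionProperty [Fintype X] [DecidableEq X] (Q : X → X → ℝ) (Y : Set X) : Prop :=
  IsConnectedSubset Q Y ∧ ∃ T : X → X, IsRetraction Q Y T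

end Prelude

section MyAux
open Finset

section LamAux
variable {Λ : ℝ → ℝ → ℝ} (hΛ : AdmissibleMean Λ)

lemma AdmissibleMean.diag (hΛ : AdmissibleMean Λ) {t : ℝ} (ht : 0 ≤ t) : Λ t t = t := by
  have := hΛ.homog t 1 1 ht zero_le_one zero_le_one
  simpa [hΛ.normalized] using this

lemma AdmissibleMean.le_lam' (hΛ : AdmissibleMean Λ) {s t : ℝ} (hs : 0 ≤ s) (hst : s ≤ t) :
    s ≤ Λ s t := by
  have ht : 0 ≤ t := hs.trans hst
  rcases eq_or_lt_of_le ht with h0 | h0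
  · have hs0 : s = 0 := le_antisymm (hst.trans h0.symm.le) hs
    subst hs0
    exact hΛ.nonneg 0 t le_rfl ht
  · have ha : 0 ≤ s / t := div_nonneg hs h0.le
    have hb : 0 ≤ 1 - s / t := by
      have : s / t ≤ 1 := (div_le_one h0).mpr hst
      linarith
    have hmem1 : ((t, t) : ℝ × ℝ) ∈ Set.Ici (0:ℝ) ×ˢ Set.Ici (0:ℝ) := ⟨ht, ht⟩
    have hmem2 : (((0:ℝ), t) : ℝ × ℝ) ∈ Set.Ici (0:ℝ) ×ˢ Set.Ici (0:ℝ) := ⟨by simp, ht⟩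
    have hcon := hΛ.concave.2 hmem1 hmem2 ha hb (by ring)
    have hpt : (s / t) • ((t, t) : ℝ × ℝ) + (1 - s / t) • (((0:ℝ), t) : ℝ × ℝ) = (s, t) := by
      have : s / t * t = s := div_mul_cancel₀ s h0.ne'
      simp only [Prod.smul_def, smul_eq_mul, Prod.mk_add_mk, Prod.ext_iff]
      constructor
      · rw [mul_zero, add_zero, this]
      · nlinarith
    rw [hpt] at hcon
    have h1 : Λ t t = t := hΛ.diag ht
    have h2 : 0 ≤ Λ 0 t := hΛ.nonneg 0 t le_rfl ht
    simp only [smul_eq_mul] at hcon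
    have : s / t * t = s := div_mul_cancel₀ s h0.ne'
    nlinarith

lemma AdmissibleMean.min_le (hΛ : AdmissibleMean Λ) {s t : ℝ} (hs : 0 ≤ s) (ht : 0 ≤ t) :
    min s t ≤ Λ s t := by
  rcases le_total s t with h | h
  · rw [min_eq_left h]; exact hΛ.le_lam' hs h
  · rw [min_eq_right h, hΛ.symm]; exact hΛ.le_lam' ht h

lemma AdmissibleMean.pos (hΛ : AdmissibleMean Λ) {s t : ℝ} (hs : 0 < s) (ht : 0 < t) :
    0 < Λ s t :=
  lt_of_lt_of_le (lt_min hs ht) (hΛ.min_le hs.le ht.le)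

lemma AdmissibleMean.le_max (hΛ : AdmissibleMean Λ) {s t : ℝ} (hs : 0 ≤ s) (ht : 0 ≤ t) :
    Λ s t ≤ max s t := by
  have hM : 0 ≤ max s t := le_trans hs (le_max_left s t)
  calc Λ s t ≤ Λ (max s t) t := hΛ.mono s (max s t) t hs (le_max_left s t) ht
  _ = Λ t (max s t) := hΛ.symm _ _
  _ ≤ Λ (max s t) (max s t) := hΛ.mono t (max s t) (max s t) ht (le_max_right s t) hM
  _ = max s t := hΛ.diag hM

end LamAux

section AfunAux
variable {Λ : ℝ → ℝ → ℝ}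

lemma Afun_zero {s t : ℝ} (hs : 0 ≤ s) (ht : 0 ≤ t) : Afun Λ s t 0 = 0 := by
  by_cases h : 0 < s ∧ 0 < t <;> simp [Afun, h, hs, ht]

lemma Afun_top {s t w : ℝ} (h : ¬(0 < s ∧ 0 < t)) (hw : w ≠ 0) : Afun Λ s t w = ⊤ := by
  simp [Afun, h, hw]

lemma Afun_eq_of_ne_top {s t w : ℝ} (h : Afun Λ s t w ≠ ⊤) (h1 : ¬(0 < s ∧ 0 < t)) : w = 0 := by
  by_contra hw
  exact h (Afun_top h1 hw)

lemma Afun_swap (hΛ : AdmissibleMean Λ) (s t w : ℝ) : Afun Λ s t w = Afun Λ t s w := by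
  by_cases hp : 0 < s ∧ 0 < t
  · simp [Afun, hp, And.intro hp.2 hp.1, hΛ.symm s t]
  · have hp' : ¬(0 < t ∧ 0 < s) := fun h => hp ⟨h.2, h.1⟩
    by_cases hw : w = 0
    · by_cases hq : 0 ≤ s ∧ 0 ≤ t
      · simp [Afun, hp, hp', hw, hq.1, hq.2]
      · have hq' : ¬(0 ≤ t ∧ 0 ≤ s) := fun h => hq ⟨h.2, h.1⟩
        simp [Afun, hp, hp', hw, hq, hq']
    · simp [Afun, hp, hp', hw]

lemma Afun_mono_left (hΛ : AdmissibleMean Λ) {s s' t : ℝ} (w : ℝ) (hs : 0 ≤ s) (hss : s ≤ s')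
    (ht : 0 ≤ t) : Afun Λ s' t w ≤ Afun Λ s t w := by
  by_cases hw : w = 0
  · subst hw
    rw [Afun_zero (hs.trans hss) ht, Afun_zero hs ht]
  by_cases h1 : 0 < s ∧ 0 < t
  · have h1' : 0 < s' ∧ 0 < t := ⟨lt_of_lt_of_le h1.1 hss, h1.2⟩
    have hpos : 0 < Λ s t := hΛ.pos h1.1 h1.2
    have hle : Λ s t ≤ Λ s' t := hΛ.mono s s' t hs hss ht
    simp only [Afun, if_pos h1, if_pos h1']
    exact ENNReal.ofReal_le_ofReal (div_le_div_of_nonneg_left (sq_nonneg w) hpos hle)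
  · rw [Afun_top h1 hw]
    exact le_top

lemma Afun_lower (hΛ : AdmissibleMean Λ) {s t c : ℝ} (w : ℝ) (hc : 0 < c) (hs : 0 ≤ s)
    (ht : 0 ≤ t) (hsc : s ≤ c) (htc : t ≤ c) :
    ENNReal.ofReal (w ^ 2 / c) ≤ Afun Λ s t w := by
  by_cases h1 : 0 < s ∧ 0 < t
  · have hpos : 0 < Λ s t := hΛ.pos h1.1 h1.2
    have hle : Λ s t ≤ c := (hΛ.le_max hs ht).trans (max_le hsc htc)
    simp only [Afun, if_pos h1]
    exact ENNReal.ofReal_le_ofReal (div_le_div_of_nonneg_left (sq_nonneg w) hpos hle)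
  · by_cases hw : w = 0
    · subst hw; simp
    · rw [Afun_top h1 hw]; exact le_top

end AfunAux

section Flow
variable {X : Type*} [Fintype X] [DecidableEq X] {Q : X → X → ℝ}

lemma exists_pathflow (hQ0 : ∀ x, Q x x = 0) (hQs : ∀ x y, 0 < Q x y → 0 < Q y x) {a b : X}
    (hab : Relation.ReflTransGen (fun u v => 0 < Q u v) a b) :
    ∃ P : X → X → ℝ, (∀ x y, P x y ≠ 0 → 0 < Q x y) ∧ (∀ x y, P y x = -P x y) ∧
      ∀ x, ∑ y, P x y = (if x = a then 1 else 0) - (if x = b then 1 else 0) := by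
  induction hab with
  | refl =>
      exact ⟨fun _ _ => 0, by simp, by simp, fun x => by simp⟩
  | @tail b c hab hbc ih =>
      obtain ⟨P, hsupp, hanti, hdiv⟩ := ih
      have hcb : 0 < Q c b := hQs _ _ hbc
      have hbc' : b ≠ c := by
        rintro rfl; rw [hQ0] at hbc; exact lt_irrefl 0 hbc
      refine ⟨fun x y => P x y + (if x = b ∧ y = c then 1 else 0)
        - (if x = c ∧ y = b then 1 else 0), ?_, ?_, ?_⟩
      · intro x y hne
        by_cases h1 : x = b ∧ y = c
        · obtain ⟨rfl, rfl⟩ := h1; exact hbc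
        by_cases h2 : x = c ∧ y = b
        · obtain ⟨rfl, rfl⟩ := h2; exact hcb
        · apply hsupp; simp only [h1, h2, if_false] at hne; simpa using hne
      · intro x y
        have h1 : (y = b ∧ x = c) ↔ (x = c ∧ y = b) := and_comm
        have h2 : (y = c ∧ x = b) ↔ (x = b ∧ y = c) := and_comm
        simp only []
        rw [hanti x y]
        by_cases hA : x = b ∧ y = c <;> by_cases hB : x = c ∧ y = b <;>
          simp [h1, h2, hA, hB, hbc', Ne.symm hbc'] <;> ring
      · intro x
        rw [Finset.sum_sub_distrib, Finset.sum_add_distrib, hdiv]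
        have s1 : ∑ y, (if x = b ∧ y = c then (1:ℝ) else 0) = if x = b then 1 else 0 := by
          by_cases h : x = b <;> simp [h]
        have s2 : ∑ y, (if x = c ∧ y = b then (1:ℝ) else 0) = if x = c then 1 else 0 := by
          by_cases h : x = c <;> simp [h]
        rw [s1, s2]; ring

lemma exists_flow [Nonempty X] (hQ0 : ∀ x, Q x x = 0) (hQs : ∀ x y, 0 < Q x y → 0 < Q y x)
    (hirr : ∀ x y, Relation.ReflTransGen (fun u v => 0 < Q u v) x y)
    (h : X → ℝ) (hsum : ∑ x, h x = 0) :
    ∃ F : X → X → ℝ, (∀ x y, F x y ≠ 0 → 0 < Q x y ∧ 0 < Q y x) ∧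
      (∀ x y, F y x = -F x y) ∧ ∀ x, ∑ y, F x y = h x := by
  obtain ⟨b0⟩ := ‹Nonempty X›
  choose P hP1 hP2 hP3 using fun a => exists_pathflow hQ0 hQs (hirr a b0)
  refine ⟨fun x y => ∑ a, h a * P a x y, ?_, ?_, ?_⟩
  · intro x y hne
    have : ∃ a ∈ Finset.univ (α := X), h a * P a x y ≠ 0 := by
      by_contra hc
      push_neg at hc
      exact hne (Finset.sum_eq_zero fun a ha => hc a ha)
    obtain ⟨a, _, ha⟩ := this
    have hPa : P a x y ≠ 0 := fun h0 => ha (by rw [h0, mul_zero])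
    exact ⟨hP1 a x y hPa, hQs _ _ (hP1 a x y hPa)⟩
  · intro x y
    rw [← Finset.sum_neg_distrib]
    exact Finset.sum_congr rfl fun a _ => by rw [hP2 a x y]; ring
  · intro x
    rw [Finset.sum_comm]
    have : ∀ a : X, ∑ y, h a * P a x y
        = h a * ((if x = a then 1 else 0) - (if x = b0 then 1 else 0)) := by
      intro a; rw [← Finset.mul_sum, hP3 a x]
    rw [Finset.sum_congr rfl fun a _ => this a]
    simp only [mul_sub]
    rw [Finset.sum_sub_distrib]
    have s1 : ∑ a, h a * (if x = a then (1:ℝ) else 0) = h x := by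
      simp [mul_ite]
    have s2 : ∑ a, h a * (if x = b0 then (1:ℝ) else 0) = (if x = b0 then (1:ℝ) else 0) * ∑ a, h a := by
      rw [Finset.mul_sum]; exact Finset.sum_congr rfl fun a _ => by ring
    rw [s1, s2, hsum, mul_zero, sub_zero]
end Flow

noncomputable def sigf : ℝ → ℝ := fun t => (1-t)^4*(1+2*t)^2
noncomputable def dsigf : ℝ → ℝ := fun t => -12*t*(1-t)^3*(1+2*t)

lemma sigf_cont : Continuous sigf := by unfold sigf; fun_prop
lemma dsigf_cont : Continuous dsigf := by unfold dsigf; fun_prop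

lemma hasDerivAt_sigf (t : ℝ) : HasDerivAt sigf (dsigf t) t := by
  have h1 : HasDerivAt (fun s : ℝ => 1 - s) (-1) t := (hasDerivAt_id t).const_sub 1
  have h14 := h1.pow 4
  have h2 : HasDerivAt (fun s : ℝ => 1 + 2*s) 2 t := by
    simpa using ((hasDerivAt_id t).const_mul 2).const_add 1
  have h22 := h2.pow 2
  have hm := h14.mul h22
  refine HasDerivAt.congr_deriv hm ?_
  unfold dsigf
  simp only [Pi.pow_apply]
  ring

lemma sigf_zero : sigf 0 = 1 := by norm_num [sigf]
lemma sigf_one : sigf 1 = 0 := by norm_num [sigf]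
lemma dsigf_zero : dsigf 0 = 0 := by norm_num [dsigf]
lemma dsigf_one : dsigf 1 = 0 := by norm_num [dsigf]

lemma sigf_nonneg (t : ℝ) : 0 ≤ sigf t := by unfold sigf; positivity

lemma sigf_le_one {t : ℝ} (h0 : 0 ≤ t) (h1 : t ≤ 1) : sigf t ≤ 1 := by
  have hx0 : 0 ≤ (1-t)^2*(1+2*t) := by positivity
  have hx1 : (1-t)^2*(1+2*t) ≤ 1 := by nlinarith [sq_nonneg t, sq_nonneg (1-t)]
  have : sigf t = ((1-t)^2*(1+2*t))^2 := by unfold sigf; ring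
  nlinarith

lemma bcoef_eq (t : ℝ) : 1 - sigf t - sigf (1-t)
    = 2*((1-t)^2*(1+2*t))*(t^2*(3-2*t)) := by
  unfold sigf; ring

lemma bcoef_ge {t : ℝ} (h0 : 0 ≤ t) (h1 : t ≤ 1) :
    2*t^2*(1-t)^2 ≤ 1 - sigf t - sigf (1-t) := by
  rw [bcoef_eq]
  have key : (0:ℝ) ≤ (t*(1-t))^3 := pow_nonneg (mul_nonneg h0 (by linarith)) 3
  nlinarith [key, sq_nonneg (t*(1-t))]

lemma bcoef_nonneg {t : ℝ} (h0 : 0 ≤ t) (h1 : t ≤ 1) : 0 ≤ 1 - sigf t - sigf (1-t) := by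
  have := bcoef_ge h0 h1
  nlinarith [sq_nonneg (t*(1-t))]

lemma dsigf_sq_le {t : ℝ} (h0 : 0 ≤ t) (h1 : t ≤ 1) : (dsigf t)^2 ≤ 144*t^2*(1-t)^2 := by
  have hx0 : 0 ≤ (1-t)^2*(1+2*t) := by positivity
  have hx1 : (1-t)^2*(1+2*t) ≤ 1 := by nlinarith [sq_nonneg t, sq_nonneg (1-t)]
  have he : (dsigf t)^2 = 144*t^2*(1-t)^2*((1-t)^2*(1+2*t))^2 := by unfold dsigf; ring
  rw [he]
  have h2 : ((1-t)^2*(1+2*t))^2 ≤ 1 := by nlinarith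
  nlinarith [mul_nonneg (mul_nonneg (by norm_num : (0:ℝ) ≤ 144) (sq_nonneg t)) (sq_nonneg (1-t))]

end MyAux
section FiniteDistance
open Finset MeasureTheory
variable {X : Type*} [Fintype X] [DecidableEq X]

lemma Wsq_ne_top (Λ : ℝ → ℝ → ℝ) (Q : X → X → ℝ) (pm : X → ℝ)
    (hMT : IsMarkovTriple Q pm) (hΛ : AdmissibleMean Λ)
    (μ0 μ1 : X → ℝ) (h0 : IsProb μ0) (h1 : IsProb μ1) :
    Wsq Λ Q μ0 μ1 ≠ ⊤ := by
  obtain ⟨hQnn, hQ0, hirr, hpm, hpmpos, hrev⟩ := hMT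
  have hNE : Nonempty X := by
    rcases isEmpty_or_nonempty X with hE | hNE
    · exfalso; have := h0.2; simp [Finset.univ_eq_empty] at this
    · exact hNE
  have hQs : ∀ x y, 0 < Q x y → 0 < Q y x := by
    intro x y hxy
    have h := hrev x y
    have hp := mul_pos (hpmpos x) hxy
    nlinarith [hpmpos y]
  obtain ⟨F, hF1, hF2, hF3⟩ := exists_flow hQ0 hQs hirr (fun x => μ0 x - pm x)
    (by rw [Finset.sum_sub_distrib, h0.2, hpm.2]; ring)
  obtain ⟨G, hG1, hG2, hG3⟩ := exists_flow hQ0 hQs hirr (fun x => μ1 x - pm x)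
    (by rw [Finset.sum_sub_distrib, h1.2, hpm.2]; ring)
  set μc : ℝ → X → ℝ := fun t x =>
    sigf t * μ0 x + sigf (1-t) * μ1 x + (1 - sigf t - sigf (1-t)) * pm x with hμc
  set Vc : ℝ → X → X → ℝ := fun t x y => -(dsigf t) * F x y + dsigf (1-t) * G x y with hVc
  have hsig1 : Continuous (fun t : ℝ => sigf (1-t)) := by
    exact sigf_cont.comp (continuous_const.sub continuous_id)
  have hdsig1 : Continuous (fun t : ℝ => dsigf (1-t)) := by
    exact dsigf_cont.comp (continuous_const.sub continuous_id)
  have hμcont : ∀ x, Continuous (fun t => μc t x) := by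
    intro x
    exact ((sigf_cont.mul continuous_const).add (hsig1.mul continuous_const)).add
      (((continuous_const.sub sigf_cont).sub hsig1).mul continuous_const)
  have hVcont : ∀ x y, Continuous (fun t => Vc t x y) := by
    intro x y
    exact ((dsigf_cont.neg).mul continuous_const).add (hdsig1.mul continuous_const)
  -- probability
  have hprob : ∀ t ∈ Set.Icc (0:ℝ) 1, IsProb (μc t) := by
    rintro t ⟨ht0, ht1⟩
    constructor
    · intro x
      have b1 := sigf_nonneg t
      have b2 := sigf_nonneg (1-t)
      have b3 := bcoef_nonneg ht0 ht1
      have := h0.1 x; have := h1.1 x; have := (hpmpos x).le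
      positivity
    · have e : ∑ x, μc t x = sigf t * (∑ x, μ0 x) + sigf (1-t) * (∑ x, μ1 x)
          + (1 - sigf t - sigf (1-t)) * (∑ x, pm x) := by
        rw [Finset.mul_sum, Finset.mul_sum, Finset.mul_sum, ← Finset.sum_add_distrib,
          ← Finset.sum_add_distrib]
      rw [e, h0.2, h1.2, hpm.2]; ring
  -- continuity equation
  have hCE1 : IsCE1 μ0 μ1 μc Vc := by
    refine ⟨fun x => (hμcont x).continuousOn, fun x y => (hVcont x y).intervalIntegrable _ _,
      hprob, ?_, ?_, ?_⟩
    · funext x; show μc 0 x = μ0 x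
      simp only [hμc]; norm_num [sigf_zero, sigf_one]
    · funext x; show μc 1 x = μ1 x
      simp only [hμc]; norm_num [sigf_zero, sigf_one]
    · intro x t ht
      have hanti : ∀ s y, Vc s y x = -Vc s x y := by
        intro s y; simp only [hVc]; rw [hF2, hG2]; ring
      have hVsum : ∀ s, (1/2 : ℝ) * ∑ y, (Vc s x y - Vc s y x)
          = (pm x - μ0 x) * dsigf s + (pm x - μ1 x) * (-dsigf (1-s)) := by
        intro s
        have e1 : ∀ y, Vc s x y - Vc s y x = 2 * Vc s x y := by
          intro y; rw [hanti s y]; ring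
        rw [Finset.sum_congr rfl fun y _ => e1 y, ← Finset.mul_sum]
        have e2 : ∑ y, Vc s x y = -(dsigf s) * (μ0 x - pm x) + dsigf (1-s) * (μ1 x - pm x) := by
          simp only [hVc]
          rw [Finset.sum_add_distrib, ← Finset.mul_sum, ← Finset.mul_sum, hF3, hG3]
        rw [e2]; ring
      have hΦ : ∀ s : ℝ, HasDerivAt
          (fun u => (pm x - μ0 x) * sigf u + (pm x - μ1 x) * sigf (1-u))
          ((pm x - μ0 x) * dsigf s + (pm x - μ1 x) * (-dsigf (1-s))) s := by
        intro s
        have hs1 : HasDerivAt (fun u : ℝ => sigf (1-u)) (-dsigf (1-s)) s := by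
          have := (hasDerivAt_sigf (1-s)).comp s ((hasDerivAt_id s).const_sub 1)
          exact this.congr_deriv (by ring)
        exact ((hasDerivAt_sigf s).const_mul (pm x - μ0 x)).add (hs1.const_mul (pm x - μ1 x))
      have hint : IntervalIntegrable
          (fun s => (pm x - μ0 x) * dsigf s + (pm x - μ1 x) * (-dsigf (1-s))) MeasureTheory.volume 0 t :=
        ((continuous_const.mul dsigf_cont).add (continuous_const.mul hdsig1.neg)).intervalIntegrable _ _
      have hftc := intervalIntegral.integral_eq_sub_of_hasDerivAt (fun s _ => hΦ s) hint
      have hcongr : ∫ s in (0:ℝ)..t, (1/2 : ℝ) * ∑ y, (Vc s x y - Vc s y x)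
          = ∫ s in (0:ℝ)..t, ((pm x - μ0 x) * dsigf s + (pm x - μ1 x) * (-dsigf (1-s))) := by
        apply intervalIntegral.integral_congr
        intro s _
        exact hVsum s
      rw [hcongr, hftc]
      simp only [hμc]
      rw [sigf_zero]
      norm_num [sigf_one]
      ring
  -- action bound
  set pmQ : X → X → ℝ := fun x y => min (pm x * Q x y) (pm y * Q y x) with hpmQ
  set K1 : X → X → ℝ := fun x y => 144 * ((F x y)^2 + (G x y)^2) / pmQ x y with hK1
  have hterm : ∀ t ∈ Set.Icc (0:ℝ) 1, ∀ x y,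
      Afun Λ (μc t x * Q x y) (μc t y * Q y x) (Vc t x y) ≤ ENNReal.ofReal (K1 x y) := by
    rintro t ⟨ht0, ht1⟩ x y
    have hμnn : ∀ z, 0 ≤ μc t z := (hprob t ⟨ht0, ht1⟩).1
    by_cases hFG : F x y = 0 ∧ G x y = 0
    · have : Vc t x y = 0 := by simp [hVc, hFG.1, hFG.2]
      rw [this, Afun_zero (mul_nonneg (hμnn x) (hQnn x y)) (mul_nonneg (hμnn y) (hQnn y x))]
      exact zero_le
    · have hQp : 0 < Q x y ∧ 0 < Q y x := by
        rcases not_and_or.mp hFG with h | h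
        · exact hF1 x y h
        · exact hG1 x y h
      have hpmQp : 0 < pmQ x y :=
        lt_min (mul_pos (hpmpos x) hQp.1) (mul_pos (hpmpos y) hQp.2)
      by_cases htb : t = 0 ∨ t = 1
      · have : Vc t x y = 0 := by
          rcases htb with rfl | rfl <;> simp [hVc, dsigf_zero, dsigf_one]
        rw [this, Afun_zero (mul_nonneg (hμnn x) (hQnn x y)) (mul_nonneg (hμnn y) (hQnn y x))]
        exact zero_le
      · push_neg at htb
        have ht0' : 0 < t := lt_of_le_of_ne ht0 (Ne.symm htb.1)
        have ht1' : t < 1 := lt_of_le_of_ne ht1 htb.2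
        have htt : 0 < 2*t^2*(1-t)^2 :=
          mul_pos (mul_pos two_pos (pow_pos ht0' 2)) (pow_pos (by linarith : (0:ℝ) < 1 - t) 2)
        have hlow : ∀ z, 2*t^2*(1-t)^2 * pm z ≤ μc t z := by
          intro z
          have hb := bcoef_ge ht0 ht1
          have := sigf_nonneg t; have := sigf_nonneg (1-t)
          have := h0.1 z; have := h1.1 z; have := (hpmpos z).le
          simp only [hμc]
          nlinarith [mul_le_mul_of_nonneg_right hb (hpmpos z).le]
        have harg1 : 2*t^2*(1-t)^2 * pmQ x y ≤ μc t x * Q x y := by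
          calc 2*t^2*(1-t)^2 * pmQ x y ≤ 2*t^2*(1-t)^2 * (pm x * Q x y) := by
                apply mul_le_mul_of_nonneg_left (min_le_left _ _) htt.le
          _ ≤ μc t x * Q x y := by
                rw [← mul_assoc]
                exact mul_le_mul_of_nonneg_right (hlow x) (hQnn x y)
        have harg2 : 2*t^2*(1-t)^2 * pmQ x y ≤ μc t y * Q y x := by
          calc 2*t^2*(1-t)^2 * pmQ x y ≤ 2*t^2*(1-t)^2 * (pm y * Q y x) := by
                apply mul_le_mul_of_nonneg_left (min_le_right _ _) htt.le
          _ ≤ μc t y * Q y x := by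
                rw [← mul_assoc]
                exact mul_le_mul_of_nonneg_right (hlow y) (hQnn y x)
        have hd : 0 < 2*t^2*(1-t)^2 * pmQ x y := mul_pos htt hpmQp
        have hpos1 : 0 < μc t x * Q x y := lt_of_lt_of_le hd harg1
        have hpos2 : 0 < μc t y * Q y x := lt_of_lt_of_le hd harg2
        have hΛlow : 2*t^2*(1-t)^2 * pmQ x y ≤ Λ (μc t x * Q x y) (μc t y * Q y x) := by
          refine le_trans ?_ (hΛ.min_le hpos1.le hpos2.le)
          exact le_min harg1 harg2
        have hw2 : (Vc t x y)^2 ≤ 288*t^2*(1-t)^2*((F x y)^2 + (G x y)^2) := by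
          have e1 := dsigf_sq_le ht0 ht1
          have e2 : (dsigf (1-t))^2 ≤ 144*(1-t)^2*t^2 := by
            have := dsigf_sq_le (t := 1-t) (by linarith) (by linarith)
            calc (dsigf (1-t))^2 ≤ 144*(1-t)^2*(1-(1-t))^2 := this
            _ = 144*(1-t)^2*t^2 := by ring
          have key : (Vc t x y)^2 ≤ 2*(dsigf t)^2*(F x y)^2 + 2*(dsigf (1-t))^2*(G x y)^2 := by
            simp only [hVc]
            nlinarith [sq_nonneg (dsigf t * F x y + dsigf (1-t) * G x y)]
          nlinarith [sq_nonneg (F x y), sq_nonneg (G x y), key, e1, e2,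
            mul_le_mul_of_nonneg_right e1 (sq_nonneg (F x y)),
            mul_le_mul_of_nonneg_right e2 (sq_nonneg (G x y))]
        have hΛpos : 0 < Λ (μc t x * Q x y) (μc t y * Q y x) := lt_of_lt_of_le hd hΛlow
        have hdiv : (Vc t x y)^2 / Λ (μc t x * Q x y) (μc t y * Q y x) ≤ K1 x y := by
          calc (Vc t x y)^2 / Λ (μc t x * Q x y) (μc t y * Q y x)
              ≤ (Vc t x y)^2 / (2*t^2*(1-t)^2 * pmQ x y) :=
                div_le_div_of_nonneg_left (sq_nonneg _) hd hΛlow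
          _ ≤ (288*t^2*(1-t)^2*((F x y)^2 + (G x y)^2)) / (2*t^2*(1-t)^2 * pmQ x y) := by
                exact div_le_div_of_nonneg_right hw2 hd.le
          _ = K1 x y := by
                simp only [hK1]
                rw [div_eq_div_iff hd.ne' hpmQp.ne']
                ring
        simp only [Afun, if_pos (And.intro hpos1 hpos2)]
        exact ENNReal.ofReal_le_ofReal hdiv
  -- total bound
  set Kbig : ENNReal := (∑ x : X, ∑ y : X, ENNReal.ofReal (K1 x y)) / 2 with hKbig
  have hactb : ∀ t ∈ Set.Icc (0:ℝ) 1, action Λ Q (μc t) (Vc t) ≤ Kbig := by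
    intro t ht
    unfold action
    apply ENNReal.div_le_div_right
    exact Finset.sum_le_sum fun x _ => Finset.sum_le_sum fun y _ => hterm t ht x y
  have hca : curveAction Λ Q μc Vc ≤ Kbig := by
    unfold curveAction
    calc ∫⁻ t in Set.Icc (0:ℝ) 1, action Λ Q (μc t) (Vc t)
        ≤ ∫⁻ _ in Set.Icc (0:ℝ) 1, Kbig := by
          apply MeasureTheory.setLIntegral_mono' measurableSet_Icc hactb
    _ = Kbig * MeasureTheory.volume (Set.Icc (0:ℝ) 1) := MeasureTheory.setLIntegral_const _ _
    _ = Kbig := by rw [Real.volume_Icc]; norm_num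
  have hKfin : Kbig ≠ ⊤ := by
    have hS : (∑ x : X, ∑ y : X, ENNReal.ofReal (K1 x y)) < ⊤ :=
      ENNReal.sum_lt_top.mpr fun x _ => ENNReal.sum_lt_top.mpr fun y _ => ENNReal.ofReal_lt_top
    exact ne_of_lt (lt_of_le_of_lt ENNReal.half_le_self hS)
  have hWle : Wsq Λ Q μ0 μ1 ≤ curveAction Λ Q μc Vc :=
    iInf_le_of_le μc (iInf_le_of_le Vc (iInf_le _ hCE1))
  exact ne_of_lt (lt_of_le_of_lt (hWle.trans hca) (lt_top_iff_ne_top.mpr hKfin))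

end FiniteDistance
section Meas
open MeasureTheory

lemma aemeasurable_afun {Λ : ℝ → ℝ → ℝ} (hΛ : AdmissibleMean Λ)
    {α : Type*} [MeasurableSpace α] {μm : MeasureTheory.Measure α}
    {f g w : α → ℝ} (hf : AEMeasurable f μm) (hg : AEMeasurable g μm)
    (hw : AEMeasurable w μm) :
    AEMeasurable (fun a => Afun Λ (f a) (g a) (w a)) μm := by
  have hΛc : Continuous (fun p : ℝ × ℝ => Λ (max p.1 0) (max p.2 0)) := by
    have hcl : Continuous (fun p : ℝ × ℝ => ((max p.1 0, max p.2 0) : ℝ × ℝ)) := by fun_prop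
    exact hΛ.contOn.comp_continuous hcl fun p => ⟨show (0:ℝ) ≤ max p.1 0 from le_max_right _ _, show (0:ℝ) ≤ max p.2 0 from le_max_right _ _⟩
  obtain ⟨f', hf'm, hff⟩ := hf
  obtain ⟨g', hg'm, hgg⟩ := hg
  obtain ⟨w', hw'm, hww⟩ := hw
  have hmeas : Measurable (fun a =>
      if 0 < f' a ∧ 0 < g' a then ENNReal.ofReal ((w' a)^2 / Λ (max (f' a) 0) (max (g' a) 0))
      else if w' a = 0 ∧ 0 ≤ f' a ∧ 0 ≤ g' a then 0 else ⊤) := by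
    apply Measurable.ite
    · exact (measurableSet_lt measurable_const hf'm).inter
        (measurableSet_lt measurable_const hg'm)
    · apply ENNReal.measurable_ofReal.comp
      apply Measurable.div
      · exact hw'm.pow_const 2
      · exact hΛc.measurable.comp (hf'm.prodMk hg'm)
    · apply Measurable.ite _ measurable_const measurable_const
      exact (measurableSet_eq_fun hw'm measurable_const).inter
        ((measurableSet_le measurable_const hf'm).inter
          (measurableSet_le measurable_const hg'm))
  refine ⟨_, hmeas, ?_⟩
  filter_upwards [hff, hgg, hww] with a h1 h2 h3
  rw [show f a = f' a from h1, show g a = g' a from h2, show w a = w' a from h3]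
  unfold Afun
  by_cases hc : 0 < f' a ∧ 0 < g' a
  · rw [if_pos hc, if_pos hc, max_eq_left hc.1.le, max_eq_left hc.2.le]
  · rw [if_neg hc, if_neg hc]
end Meas
section MainTheorem
open MeasureTheory Finset

/-- **Optimal transport avoids dead ends (strong locality)** (Theorem 5.6): if `X₂` is a dead
end for `X₁` and `(μ, V)` is a minimiser of the action among solutions of the continuity
equation joining two measures supported in `X₁`, then `μ_t` is supported in `X₁` for all
`t ∈ [0,1]`. -/
theorem transport_avoids_dead_ends {X : Type*} [Fintype X] [DecidableEq X]
    (Λ : ℝ → ℝ → ℝ) (Q : X → X → ℝ) (pm : X → ℝ)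
    (hMT : IsMarkovTriple Q pm) (hΛ : AdmissibleMean Λ)
    (X1 X2 : Set X) (star : X)
    (hcover : X1 ∪ X2 = Set.univ) (hinter : X1 ∩ X2 = {star})
    (hdead : ∀ x ∈ X1, x ≠ star → ∀ y ∈ X2, y ≠ star → Q x y = 0 ∧ Q y x = 0)
    (μ0 μ1 : X → ℝ) (μ : ℝ → X → ℝ) (V : ℝ → X → X → ℝ)
    (hCE : IsCE1 μ0 μ1 μ V)
    (hmin : curveAction Λ Q μ V = Wsq Λ Q μ0 μ1)
    (hs0 : ∀ x, μ0 x ≠ 0 → x ∈ X1) (hs1 : ∀ x, μ1 x ≠ 0 → x ∈ X1) :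
    ∀ t ∈ Set.Icc (0 : ℝ) 1, ∀ x, μ t x ≠ 0 → x ∈ X1 := by
  classical
  intro t0 ht0 x0 hx0
  by_contra hx0X1
  -- basic structure facts
  have hQnn := hMT.1
  have hQ0 := hMT.2.1
  have hirr := hMT.2.2.1
  have hpm := hMT.2.2.2.1
  have hpmpos := hMT.2.2.2.2.1
  have hrev := hMT.2.2.2.2.2
  have hstar : star ∈ X1 := by
    have : star ∈ X1 ∩ X2 := by rw [hinter]; rfl
    exact this.1
  have hcompl : ∀ z, z ∉ X1 → z ∈ X2 ∧ z ≠ star := by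
    intro z hz
    have hz2 : z ∈ X1 ∪ X2 := by rw [hcover]; trivial
    exact ⟨hz2.resolve_left hz, fun h => hz (h ▸ hstar)⟩
  have hdead' : ∀ y z, y ∈ X1 → y ≠ star → z ∉ X1 → Q y z = 0 ∧ Q z y = 0 := by
    intro y z hy hys hz
    exact hdead y hy hys z (hcompl z hz).1 (hcompl z hz).2
  -- continuity equation components
  have hμcont := hCE.1
  have hVint := hCE.2.1
  have hprob := hCE.2.2.1
  have hμzero : μ 0 = μ0 := hCE.2.2.2.1
  have hμone : μ 1 = μ1 := hCE.2.2.2.2.1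
  have hCEeq := hCE.2.2.2.2.2
  -- finiteness
  have hprob0 : IsProb μ0 := hμzero ▸ hprob 0 ⟨le_rfl, zero_le_one⟩
  have hprob1 : IsProb μ1 := hμone ▸ hprob 1 ⟨zero_le_one, le_rfl⟩
  have hWfin : Wsq Λ Q μ0 μ1 ≠ ⊤ := Wsq_ne_top Λ Q pm hMT hΛ μ0 μ1 hprob0 hprob1
  have hfin : curveAction Λ Q μ V ≠ ⊤ := by rw [hmin]; exact hWfin
  set ρ : Measure ℝ := volume.restrict (Set.Icc (0:ℝ) 1) with hρ
  -- measurability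
  have hVmeas : ∀ x y, AEMeasurable (fun s => V s x y) ρ := by
    intro x y
    have hio : IntegrableOn (fun s => V s x y) (Set.Ioc (0:ℝ) 1) volume :=
      (intervalIntegrable_iff_integrableOn_Ioc_of_le zero_le_one).mp (hVint x y)
    have h := hio.aestronglyMeasurable.aemeasurable
    rwa [hρ, ← Measure.restrict_congr_set Ioc_ae_eq_Icc]
  have hμmeas : ∀ x, AEMeasurable (fun s => μ s x) ρ := fun x =>
    ContinuousOn.aemeasurable (hμcont x) measurableSet_Icc
  have hactmeas : AEMeasurable (fun s => action Λ Q (μ s) (V s)) ρ := by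
    have hsum : AEMeasurable
        (fun s => ∑ x, ∑ y, Afun Λ (μ s x * Q x y) (μ s y * Q y x) (V s x y)) ρ := by
      apply Finset.aemeasurable_fun_sum
      intro x _
      apply Finset.aemeasurable_fun_sum
      intro y _
      exact aemeasurable_afun hΛ ((hμmeas x).mul_const _) ((hμmeas y).mul_const _) (hVmeas x y)
    exact hsum.div aemeasurable_const
  have htermfin : ∀ᵐ s ∂ρ, ∀ x y,
      Afun Λ (μ s x * Q x y) (μ s y * Q y x) (V s x y) ≠ ⊤ := by
    have hae : ∀ᵐ s ∂ρ, action Λ Q (μ s) (V s) < ⊤ := by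
      apply ae_lt_top' hactmeas
      exact hfin
    filter_upwards [hae] with s hs
    intro x y
    have h2 : (∑ x, ∑ y, Afun Λ (μ s x * Q x y) (μ s y * Q y x) (V s x y))
        = 2 * action Λ Q (μ s) (V s) := by
      unfold action
      rw [ENNReal.mul_div_cancel two_ne_zero ENNReal.ofNat_ne_top]
    have hlt : (∑ x, ∑ y, Afun Λ (μ s x * Q x y) (μ s y * Q y x) (V s x y)) < ⊤ := by
      rw [h2]
      exact ENNReal.mul_lt_top (by simp) hs
    refine ne_of_lt (lt_of_le_of_lt ?_ hlt)
    calc Afun Λ (μ s x * Q x y) (μ s y * Q y x) (V s x y)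
        ≤ ∑ y, Afun Λ (μ s x * Q x y) (μ s y * Q y x) (V s x y) :=
          Finset.single_le_sum (f := fun y => Afun Λ (μ s x * Q x y) (μ s y * Q y x) (V s x y))
            (fun i _ => zero_le) (Finset.mem_univ y)
    _ ≤ ∑ x, ∑ y, Afun Λ (μ s x * Q x y) (μ s y * Q y x) (V s x y) :=
          Finset.single_le_sum (f := fun x => ∑ y, Afun Λ (μ s x * Q x y) (μ s y * Q y x) (V s x y))
            (fun i _ => zero_le) (Finset.mem_univ x)
  have hdeadV : ∀ᵐ s ∂ρ, ∀ y z, y ∈ X1 → y ≠ star → z ∉ X1 →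
      V s y z = 0 ∧ V s z y = 0 := by
    filter_upwards [htermfin] with s hterm
    intro y z hy hys hz
    have hq := hdead' y z hy hys hz
    constructor
    · apply Afun_eq_of_ne_top (hterm y z)
      rw [hq.1, mul_zero]
      simp
    · apply Afun_eq_of_ne_top (hterm z y)
      rw [hq.2, mul_zero]
      simp
  -- the bad set
  set Sf : Finset X := Finset.univ.filter (fun z => z ∉ X1) with hSf
  have hmemSf : ∀ z, z ∈ Sf ↔ z ∉ X1 := by
    intro z; simp [hSf]
  have hstarSf : star ∉ Sf := by
    rw [hmemSf]; exact fun h => h hstar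
  -- mass in the bad region
  set H : ℝ → ℝ := fun s => (1/2) * ∑ z ∈ Sf, ∑ y, (V s z y - V s y z) with hH
  have hfzint : ∀ z, ∀ t ∈ Set.Icc (0:ℝ) 1, IntervalIntegrable
      (fun s => (1/2 : ℝ) * ∑ y, (V s z y - V s y z)) volume 0 t := by
    intro z t ht
    have hsum : IntervalIntegrable (fun s => ∑ y, (V s z y - V s y z)) volume 0 1 := by
      have h := IntervalIntegrable.sum (μ := volume) (a := 0) (b := 1)
        (f := fun y s => V s z y - V s y z) Finset.univ
        (fun y _ => (hVint z y).sub (hVint y z))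
      have e : (∑ y : X, fun s => V s z y - V s y z) = fun s => ∑ y, (V s z y - V s y z) := by
        funext s
        simp [Finset.sum_apply]
      rwa [e] at h
    have hmul : IntervalIntegrable (fun s => (1/2 : ℝ) * ∑ y, (V s z y - V s y z)) volume 0 1 :=
      hsum.const_mul _
    apply hmul.mono_set
    apply Set.uIcc_subset_uIcc
    · rw [Set.uIcc_of_le zero_le_one]; exact ⟨le_rfl, zero_le_one⟩
    · rw [Set.uIcc_of_le zero_le_one]; exact ht
  have hmass : ∀ t ∈ Set.Icc (0:ℝ) 1,
      ∑ z ∈ Sf, μ t z = - ∫ s in (0:ℝ)..t, H s := by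
    intro t ht
    have e1 : ∀ z ∈ Sf, μ t z
        = μ0 z - ∫ s in (0:ℝ)..t, (1/2 : ℝ) * ∑ y, (V s z y - V s y z) :=
      fun z _ => hCEeq z t ht
    rw [Finset.sum_congr rfl e1, Finset.sum_sub_distrib]
    have e2 : ∑ z ∈ Sf, μ0 z = 0 := Finset.sum_eq_zero fun z hzz => by
      by_contra h
      exact ((hmemSf z).mp hzz) (hs0 z h)
    rw [e2, ← intervalIntegral.integral_finset_sum fun z _ => hfzint z t ht]
    have e3 : ∀ s, (∑ z ∈ Sf, (1/2 : ℝ) * ∑ y, (V s z y - V s y z)) = H s := by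
      intro s
      rw [hH]
      simp only
      rw [Finset.mul_sum]
    rw [intervalIntegral.integral_congr fun s _ => e3 s]
    ring
  -- the competitor
  set νf : ℝ → X → ℝ := fun s z =>
    if z ∈ X1 then (if z = star then μ s star + ∑ u ∈ Sf, μ s u else μ s z) else 0 with hνf
  set Wf : ℝ → X → X → ℝ := fun s y z =>
    if y ∈ X1 ∧ z ∈ X1 then V s y z else 0 with hWf
  have hCEν : IsCE1 μ0 μ1 νf Wf := by
    refine ⟨?_, ?_, ?_, ?_, ?_, ?_⟩
    · -- continuity
      intro z
      by_cases h1 : z ∈ X1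
      · by_cases h2 : z = star
        · simp only [hνf, if_pos h1, if_pos h2]
          exact (hμcont star).add (continuousOn_finset_sum Sf fun u _ => hμcont u)
        · simp only [hνf, if_pos h1, if_neg h2]
          exact hμcont z
      · simp only [hνf, if_neg h1]
        exact continuousOn_const
    · -- integrability
      intro x y
      by_cases h : x ∈ X1 ∧ y ∈ X1
      · simp only [hWf, if_pos h]; exact hVint x y
      · simp only [hWf, if_neg h]; exact intervalIntegrable_const
    · -- probability
      intro t ht
      have hμnn : ∀ z, 0 ≤ μ t z := (hprob t ht).1
      constructor
      · intro z
        simp only [hνf]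
        split_ifs
        · exact add_nonneg (hμnn star) (Finset.sum_nonneg fun u _ => hμnn u)
        · exact hμnn z
        · exact le_rfl
      · have hsplit : ∑ z, νf t z = (∑ z ∈ Sf, νf t z)
            + ∑ z ∈ Finset.univ.filter (fun z => ¬ z ∉ X1), νf t z := by
          rw [hSf]
          exact (Finset.sum_filter_add_sum_filter_not _ _ _).symm
        have h0 : ∀ z ∈ Sf, νf t z = 0 := fun z hz => by
          simp only [hνf, if_neg ((hmemSf z).mp hz)]
        have hstarmem : star ∈ Finset.univ.filter (fun z => ¬ z ∉ X1) := by
          simp [hstar]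
        have hsum2 : ∑ z ∈ Finset.univ.filter (fun z => ¬ z ∉ X1), νf t z
            = νf t star + ∑ z ∈ (Finset.univ.filter (fun z => ¬ z ∉ X1)).erase star, νf t z :=
          (Finset.add_sum_erase _ _ hstarmem).symm
        have herase : ∀ z ∈ (Finset.univ.filter (fun z => ¬ z ∉ X1)).erase star,
            νf t z = μ t z := by
          intro z hz
          have h1 := Finset.mem_erase.mp hz
          have h2 : z ∈ X1 := by simpa using (Finset.mem_filter.mp h1.2).2
          simp only [hνf, if_pos h2, if_neg h1.1]
        have hνstarval : νf t star = μ t star + ∑ u ∈ Sf, μ t u := by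
          simp [hνf, hstar]
        have hμsplit : (1:ℝ) = (∑ z ∈ Sf, μ t z)
            + ∑ z ∈ Finset.univ.filter (fun z => ¬ z ∉ X1), μ t z := by
          rw [← (hprob t ht).2, hSf]
          exact (Finset.sum_filter_add_sum_filter_not _ _ _).symm
        have hμsum2 : ∑ z ∈ Finset.univ.filter (fun z => ¬ z ∉ X1), μ t z
            = μ t star + ∑ z ∈ (Finset.univ.filter (fun z => ¬ z ∉ X1)).erase star, μ t z :=
          (Finset.add_sum_erase _ _ hstarmem).symm
        rw [hsplit, Finset.sum_eq_zero h0, zero_add, hsum2, hνstarval,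
          Finset.sum_congr rfl herase, hμsplit, hμsum2]
        ring
    · -- time 0
      funext z
      show νf 0 z = μ0 z
      by_cases h1 : z ∈ X1
      · by_cases h2 : z = star
        · simp only [hνf, if_pos h1, if_pos h2, hμzero]
          have hz0 : ∑ u ∈ Sf, μ0 u = 0 := Finset.sum_eq_zero fun u hu => by
            by_contra h; exact ((hmemSf u).mp hu) (hs0 u h)
          rw [hz0, add_zero, h2]
        · simp only [hνf, if_pos h1, if_neg h2, hμzero]
      · simp only [hνf, if_neg h1]
        have : μ0 z = 0 := by by_contra h; exact h1 (hs0 z h)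
        exact this.symm
    · -- time 1
      funext z
      show νf 1 z = μ1 z
      by_cases h1 : z ∈ X1
      · by_cases h2 : z = star
        · simp only [hνf, if_pos h1, if_pos h2, hμone]
          have hz0 : ∑ u ∈ Sf, μ1 u = 0 := Finset.sum_eq_zero fun u hu => by
            by_contra h; exact ((hmemSf u).mp hu) (hs1 u h)
          rw [hz0, add_zero, h2]
        · simp only [hνf, if_pos h1, if_neg h2, hμone]
      · simp only [hνf, if_neg h1]
        have : μ1 z = 0 := by by_contra h; exact h1 (hs1 z h)
        exact this.symm
    · -- continuity equation
      intro z t ht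
      have hdv' : ∀ᵐ s ∂(volume : Measure ℝ), s ∈ Set.Icc (0:ℝ) 1 →
          ∀ y u, y ∈ X1 → y ≠ star → u ∉ X1 → V s y u = 0 ∧ V s u y = 0 :=
        (ae_restrict_iff' measurableSet_Icc).mp hdeadV
      by_cases h1 : z ∈ X1
      swap
      · have hW0 : ∀ s, (1/2 : ℝ) * ∑ y, (Wf s z y - Wf s y z) = 0 := by
          intro s
          have hzero : ∀ y, Wf s z y - Wf s y z = 0 := by
            intro y
            have a1 : Wf s z y = 0 := by
              simp only [hWf]; exact if_neg (fun h => h1 h.1)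
            have a2 : Wf s y z = 0 := by
              simp only [hWf]; exact if_neg (fun h => h1 h.2)
            rw [a1, a2, sub_zero]
          rw [Finset.sum_eq_zero fun y _ => hzero y, mul_zero]
        have hμ00 : μ0 z = 0 := by by_contra h; exact h1 (hs0 z h)
        have hν0 : νf t z = 0 := by simp only [hνf, if_neg h1]
        rw [hν0, hμ00, intervalIntegral.integral_congr (fun s _ => hW0 s)]
        simp
      · by_cases h2 : z = star
        swap
        · have hν : νf t z = μ t z := by simp only [hνf, if_pos h1, if_neg h2]
          rw [hν, hCEeq z t ht]
          congr 1
          apply intervalIntegral.integral_congr_ae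
          filter_upwards [hdv'] with s hds hmem
          have hsIcc : s ∈ Set.Icc (0:ℝ) 1 := by
            rw [Set.uIoc_of_le ht.1] at hmem
            exact ⟨hmem.1.le, hmem.2.trans ht.2⟩
          have hdv := hds hsIcc
          congr 1
          apply Finset.sum_congr rfl
          intro y _
          by_cases hy : y ∈ X1
          · have w1 : Wf s z y = V s z y := by
              simp only [hWf, if_pos (⟨h1, hy⟩ : z ∈ X1 ∧ y ∈ X1)]
            have w2 : Wf s y z = V s y z := by
              simp only [hWf, if_pos (⟨hy, h1⟩ : y ∈ X1 ∧ z ∈ X1)]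
            rw [w1, w2]
          · have hd := hdv z y h1 h2 hy
            have w1 : Wf s z y = 0 := by
              simp only [hWf]; exact if_neg (fun h => hy h.2)
            have w2 : Wf s y z = 0 := by
              simp only [hWf]; exact if_neg (fun h => hy h.1)
            rw [w1, w2, hd.1, hd.2]
        · rw [h2]
          have hνstarval : νf t star = μ t star + ∑ u ∈ Sf, μ t u := by
            simp [hνf, hstar]
          have hμ0Sf : ∑ u ∈ Sf, μ0 u = 0 := Finset.sum_eq_zero fun u hu => by
            by_contra h; exact ((hmemSf u).mp hu) (hs0 u h)
          have hsum : ∑ u ∈ Sf, μ t u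
              = - ∫ s in (0:ℝ)..t, ∑ u ∈ Sf, ((1/2 : ℝ) * ∑ y, (V s u y - V s y u)) := by
            rw [Finset.sum_congr rfl (fun u _ => hCEeq u t ht), Finset.sum_sub_distrib,
              hμ0Sf, zero_sub, ← intervalIntegral.integral_finset_sum fun u _ => hfzint u t ht]
          have hsumint : IntervalIntegrable
              (fun s => ∑ u ∈ Sf, ((1/2 : ℝ) * ∑ y, (V s u y - V s y u))) volume 0 t := by
            have h := IntervalIntegrable.sum (μ := volume) (a := 0) (b := t)
              (f := fun u s => (1/2:ℝ) * ∑ y, (V s u y - V s y u)) Sf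
              (fun u _ => hfzint u t ht)
            have e : (∑ u ∈ Sf, fun s => (1/2:ℝ) * ∑ y, (V s u y - V s y u))
                = fun s => ∑ u ∈ Sf, ((1/2:ℝ) * ∑ y, (V s u y - V s y u)) := by
              funext s
              simp [Finset.sum_apply]
            rwa [e] at h
          have hintadd : ∫ s in (0:ℝ)..t, ((1/2 : ℝ) * ∑ y, (V s star y - V s y star)
                + ∑ u ∈ Sf, ((1/2:ℝ) * ∑ y, (V s u y - V s y u)))
              = (∫ s in (0:ℝ)..t, (1/2 : ℝ) * ∑ y, (V s star y - V s y star))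
                + ∫ s in (0:ℝ)..t, ∑ u ∈ Sf, ((1/2:ℝ) * ∑ y, (V s u y - V s y u)) :=
            intervalIntegral.integral_add (hfzint star t ht) hsumint
          have hW_eq : ∫ s in (0:ℝ)..t, ((1/2 : ℝ) * ∑ y, (Wf s star y - Wf s y star))
              = ∫ s in (0:ℝ)..t, ((1/2 : ℝ) * ∑ y, (V s star y - V s y star)
                + ∑ u ∈ Sf, ((1/2:ℝ) * ∑ y, (V s u y - V s y u))) := by
            apply intervalIntegral.integral_congr_ae
            filter_upwards [hdv'] with s hds hmem
            have hsIcc : s ∈ Set.Icc (0:ℝ) 1 := by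
              rw [Set.uIoc_of_le ht.1] at hmem
              exact ⟨hmem.1.le, hmem.2.trans ht.2⟩
            have hdv := hds hsIcc
            -- algebraic identity
            have hB : ∑ y, (Wf s star y - Wf s y star)
                = ∑ y ∈ Finset.univ.filter (fun y => ¬ y ∉ X1), (V s star y - V s y star) := by
              rw [show (Finset.univ : Finset X)
                  = Finset.univ from rfl]
              rw [← Finset.sum_filter_add_sum_filter_not Finset.univ (fun y => y ∉ X1)
                (fun y => Wf s star y - Wf s y star)]
              have hz1 : ∀ y ∈ Finset.univ.filter (fun y => y ∉ X1),
                  Wf s star y - Wf s y star = 0 := by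
                intro y hy
                have hyn : y ∉ X1 := (Finset.mem_filter.mp hy).2
                have a1 : Wf s star y = 0 := by
                  simp only [hWf]; exact if_neg (fun h => hyn h.2)
                have a2 : Wf s y star = 0 := by
                  simp only [hWf]; exact if_neg (fun h => hyn h.1)
                rw [a1, a2, sub_zero]
              rw [Finset.sum_eq_zero hz1, zero_add]
              apply Finset.sum_congr rfl
              intro y hy
              have hyX1 : y ∈ X1 := by simpa using (Finset.mem_filter.mp hy).2
              have a1 : Wf s star y = V s star y := by
                simp only [hWf, if_pos (⟨hstar, hyX1⟩ : star ∈ X1 ∧ y ∈ X1)]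
              have a2 : Wf s y star = V s y star := by
                simp only [hWf, if_pos (⟨hyX1, hstar⟩ : y ∈ X1 ∧ star ∈ X1)]
              rw [a1, a2]
            have hC : ∑ y, (V s star y - V s y star)
                = (∑ y ∈ Sf, (V s star y - V s y star))
                  + ∑ y ∈ Finset.univ.filter (fun y => ¬ y ∉ X1), (V s star y - V s y star) := by
              rw [hSf]
              exact (Finset.sum_filter_add_sum_filter_not _ _ _).symm
            have hA1 : ∑ u ∈ Sf, ∑ y ∈ Sf, (V s u y - V s y u) = 0 := by
              calc ∑ u ∈ Sf, ∑ y ∈ Sf, (V s u y - V s y u)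
                  = (∑ u ∈ Sf, ∑ y ∈ Sf, V s u y) - (∑ u ∈ Sf, ∑ y ∈ Sf, V s y u) := by
                    rw [← Finset.sum_sub_distrib]
                    exact Finset.sum_congr rfl fun u _ => Finset.sum_sub_distrib _ _
              _ = 0 := by
                    rw [Finset.sum_comm (s := Sf) (t := Sf) (f := fun u y => V s y u)]
                    exact sub_self _
            have hA2 : ∀ u ∈ Sf,
                ∑ y ∈ Finset.univ.filter (fun y => ¬ y ∉ X1), (V s u y - V s y u)
                = V s u star - V s star u := by
              intro u hu
              apply Finset.sum_eq_single_of_mem star (by simp [hstar])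
              intro y hy hyne
              have hyX1 : y ∈ X1 := by simpa using (Finset.mem_filter.mp hy).2
              have hd := hdv y u hyX1 hyne ((hmemSf u).mp hu)
              rw [hd.1, hd.2, sub_zero]
            have hD : ∑ u ∈ Sf, ∑ y, (V s u y - V s y u)
                = ∑ u ∈ Sf, (V s u star - V s star u) := by
              calc ∑ u ∈ Sf, ∑ y, (V s u y - V s y u)
                  = ∑ u ∈ Sf, ((∑ y ∈ Sf, (V s u y - V s y u))
                      + ∑ y ∈ Finset.univ.filter (fun y => ¬ y ∉ X1), (V s u y - V s y u)) := by
                    apply Finset.sum_congr rfl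
                    intro u _
                    rw [hSf]
                    exact (Finset.sum_filter_add_sum_filter_not _ _ _).symm
              _ = (∑ u ∈ Sf, ∑ y ∈ Sf, (V s u y - V s y u))
                    + ∑ u ∈ Sf, (V s u star - V s star u) := by
                    rw [Finset.sum_add_distrib]
                    congr 1
                    exact Finset.sum_congr rfl hA2
              _ = ∑ u ∈ Sf, (V s u star - V s star u) := by rw [hA1, zero_add]
            have hcancel : (∑ y ∈ Sf, (V s star y - V s y star))
                + ∑ u ∈ Sf, (V s u star - V s star u) = 0 := by
              rw [← Finset.sum_add_distrib]
              apply Finset.sum_eq_zero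
              intro u _
              ring
            have e2 : ∑ u ∈ Sf, ((1/2:ℝ) * ∑ y, (V s u y - V s y u))
                = (1/2 : ℝ) * ∑ u ∈ Sf, ∑ y, (V s u y - V s y u) := by
              rw [Finset.mul_sum]
            rw [e2, hD, hB, hC]
            ring_nf
            nlinarith [hcancel]
          rw [hνstarval, hCEeq star t ht, hsum, hW_eq, hintadd]
          ring
  -- pointwise action comparison
  set E : ℝ → ℝ≥0∞ := fun s => ∑ z ∈ Sf,
    (Afun Λ (μ s star * Q star z) (μ s z * Q z star) (V s star z)
      + Afun Λ (μ s z * Q z star) (μ s star * Q star z) (V s z star)) with hE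
  have hcomp : ∀ s ∈ Set.Icc (0:ℝ) 1,
      action Λ Q (νf s) (Wf s) + E s / 2 ≤ action Λ Q (μ s) (V s) := by
    intro s hs
    have hμnn : ∀ z, 0 ≤ μ s z := (hprob s hs).1
    have hνnn : ∀ z, 0 ≤ νf s z := by
      intro z
      simp only [hνf]
      split_ifs with h1 h2
      · exact add_nonneg (hμnn star) (Finset.sum_nonneg fun u _ => hμnn u)
      · exact hμnn z
      · exact le_rfl
    have hνeq : ∀ z, z ∈ X1 → z ≠ star → νf s z = μ s z := by
      intro z h1 h2; simp only [hνf, if_pos h1, if_neg h2]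
    have hνstar : μ s star ≤ νf s star := by
      simp only [hνf, if_pos hstar, if_pos rfl]
      exact le_add_of_nonneg_right (Finset.sum_nonneg fun u _ => hμnn u)
    have hpair : ∀ x y, Afun Λ (νf s x * Q x y) (νf s y * Q y x) (Wf s x y)
        ≤ Afun Λ (μ s x * Q x y) (μ s y * Q y x) (V s x y) := by
      intro x y
      by_cases hxy : x ∈ X1 ∧ y ∈ X1
      · have hW : Wf s x y = V s x y := by simp only [hWf, if_pos hxy]
        rw [hW]
        by_cases hx : x = star
        · by_cases hy : y = star
          · rw [hx, hy]
            simp only [hQ0 star, mul_zero]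
            exact le_rfl
          · rw [hx]
            rw [hνeq y hxy.2 hy]
            exact Afun_mono_left hΛ _ (mul_nonneg (hμnn star) (hQnn star y))
              (mul_le_mul_of_nonneg_right hνstar (hQnn star y))
              (mul_nonneg (hμnn y) (hQnn y star))
        · by_cases hy : y = star
          · rw [hy]
            rw [hνeq x hxy.1 hx,
              Afun_swap hΛ (μ s x * Q x star) (νf s star * Q star x),
              Afun_swap hΛ (μ s x * Q x star) (μ s star * Q star x)]
            exact Afun_mono_left hΛ _ (mul_nonneg (hμnn star) (hQnn star x))
              (mul_le_mul_of_nonneg_right hνstar (hQnn star x))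
              (mul_nonneg (hμnn x) (hQnn x star))
          · rw [hνeq x hxy.1 hx, hνeq y hxy.2 hy]
      · have hW : Wf s x y = 0 := by simp only [hWf, if_neg hxy]
        rw [hW, Afun_zero (mul_nonneg (hνnn x) (hQnn x y)) (mul_nonneg (hνnn y) (hQnn y x))]
        exact zero_le
    have hrow : ∀ x, (∑ y, Afun Λ (νf s x * Q x y) (νf s y * Q y x) (Wf s x y))
        + ((if x = star then
            ∑ z ∈ Sf, Afun Λ (μ s star * Q star z) (μ s z * Q z star) (V s star z) else 0)
          + (if x ∈ Sf then
            Afun Λ (μ s x * Q x star) (μ s star * Q star x) (V s x star) else 0))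
        ≤ ∑ y, Afun Λ (μ s x * Q x y) (μ s y * Q y x) (V s x y) := by
      intro x
      by_cases hx : x = star
      · rw [hx, if_pos rfl, if_neg hstarSf, add_zero]
        have hsplitR : (∑ y, Afun Λ (μ s star * Q star y) (μ s y * Q y star) (V s star y))
            = (∑ y ∈ Sf, Afun Λ (μ s star * Q star y) (μ s y * Q y star) (V s star y))
              + ∑ y ∈ Finset.univ.filter (fun y => ¬ y ∉ X1),
                  Afun Λ (μ s star * Q star y) (μ s y * Q y star) (V s star y) := by
          rw [hSf]
          exact (Finset.sum_filter_add_sum_filter_not _ _ _).symm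
        have hsplitL : (∑ y, Afun Λ (νf s star * Q star y) (νf s y * Q y star) (Wf s star y))
            = (∑ y ∈ Sf, Afun Λ (νf s star * Q star y) (νf s y * Q y star) (Wf s star y))
              + ∑ y ∈ Finset.univ.filter (fun y => ¬ y ∉ X1),
                  Afun Λ (νf s star * Q star y) (νf s y * Q y star) (Wf s star y) := by
          rw [hSf]
          exact (Finset.sum_filter_add_sum_filter_not _ _ _).symm
        have hLSf : ∀ y ∈ Sf,
            Afun Λ (νf s star * Q star y) (νf s y * Q y star) (Wf s star y) = 0 := by
          intro y hy
          have hyn : y ∉ X1 := (hmemSf y).mp hy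
          have hW0 : Wf s star y = 0 := by
            simp only [hWf]
            exact if_neg (fun h => hyn h.2)
          rw [hW0, Afun_zero (mul_nonneg (hνnn star) (hQnn star y))
            (mul_nonneg (hνnn y) (hQnn y star))]
        rw [hsplitL, hsplitR, Finset.sum_eq_zero hLSf, zero_add]
        calc (∑ y ∈ Finset.univ.filter (fun y => ¬ y ∉ X1),
                Afun Λ (νf s star * Q star y) (νf s y * Q y star) (Wf s star y))
              + ∑ z ∈ Sf, Afun Λ (μ s star * Q star z) (μ s z * Q z star) (V s star z)
            = (∑ z ∈ Sf, Afun Λ (μ s star * Q star z) (μ s z * Q z star) (V s star z))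
              + ∑ y ∈ Finset.univ.filter (fun y => ¬ y ∉ X1),
                Afun Λ (νf s star * Q star y) (νf s y * Q y star) (Wf s star y) :=
              add_comm _ _
        _ ≤ (∑ y ∈ Sf, Afun Λ (μ s star * Q star y) (μ s y * Q y star) (V s star y))
              + ∑ y ∈ Finset.univ.filter (fun y => ¬ y ∉ X1),
                Afun Λ (μ s star * Q star y) (μ s y * Q y star) (V s star y) :=
              add_le_add le_rfl (Finset.sum_le_sum fun y _ => hpair star y)
      · by_cases hxSf : x ∈ Sf
        · rw [if_neg hx, if_pos hxSf, zero_add]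
          have hxn : x ∉ X1 := (hmemSf x).mp hxSf
          have hL0 : ∀ y, Afun Λ (νf s x * Q x y) (νf s y * Q y x) (Wf s x y) = 0 := by
            intro y
            have hW0 : Wf s x y = 0 := by
              simp only [hWf]
              exact if_neg (fun h => hxn h.1)
            rw [hW0, Afun_zero (mul_nonneg (hνnn x) (hQnn x y))
              (mul_nonneg (hνnn y) (hQnn y x))]
          rw [Finset.sum_eq_zero fun y _ => hL0 y, zero_add]
          exact Finset.single_le_sum
            (f := fun y => Afun Λ (μ s x * Q x y) (μ s y * Q y x) (V s x y))
            (fun i _ => zero_le) (Finset.mem_univ star)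
        · rw [if_neg hx, if_neg hxSf, add_zero, add_zero]
          exact Finset.sum_le_sum fun y _ => hpair x y
    have e1 : ∑ x, (if x = star then
        ∑ z ∈ Sf, Afun Λ (μ s star * Q star z) (μ s z * Q z star) (V s star z) else 0)
        = ∑ z ∈ Sf, Afun Λ (μ s star * Q star z) (μ s z * Q z star) (V s star z) := by
      rw [Finset.sum_ite_eq' Finset.univ star, if_pos (Finset.mem_univ star)]
    have e2 : ∑ x, (if x ∈ Sf then
        Afun Λ (μ s x * Q x star) (μ s star * Q star x) (V s x star) else 0)
        = ∑ z ∈ Sf, Afun Λ (μ s z * Q z star) (μ s star * Q star z) (V s z star) := by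
      rw [Finset.sum_ite_mem, Finset.univ_inter]
    have hfinal : (∑ x, ∑ y, Afun Λ (νf s x * Q x y) (νf s y * Q y x) (Wf s x y)) + E s
        ≤ ∑ x, ∑ y, Afun Λ (μ s x * Q x y) (μ s y * Q y x) (V s x y) := by
      have eE : E s = (∑ z ∈ Sf, Afun Λ (μ s star * Q star z) (μ s z * Q z star) (V s star z))
          + ∑ z ∈ Sf, Afun Λ (μ s z * Q z star) (μ s star * Q star z) (V s z star) := by
        rw [hE]
        simp only
        rw [Finset.sum_add_distrib]
      rw [eE, ← e1, ← e2, ← Finset.sum_add_distrib, ← Finset.sum_add_distrib]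
      exact Finset.sum_le_sum fun x _ => hrow x
    show (∑ x, ∑ y, Afun Λ (νf s x * Q x y) (νf s y * Q y x) (Wf s x y)) / 2 + E s / 2
        ≤ (∑ x, ∑ y, Afun Λ (μ s x * Q x y) (μ s y * Q y x) (V s x y)) / 2
    rw [← ENNReal.add_div]
    exact ENNReal.div_le_div_right hfinal _
  -- integrate and cancel
  have hEzero : ∫⁻ s, E s / 2 ∂ρ = 0 := by
    have hWle : Wsq Λ Q μ0 μ1 ≤ curveAction Λ Q νf Wf :=
      iInf_le_of_le νf (iInf_le_of_le Wf (iInf_le _ hCEν))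
    have hcurv_eq : curveAction Λ Q νf Wf = ∫⁻ s, action Λ Q (νf s) (Wf s) ∂ρ := rfl
    have hcurv_eq2 : curveAction Λ Q μ V = ∫⁻ s, action Λ Q (μ s) (V s) ∂ρ := rfl
    have h1 : curveAction Λ Q νf Wf + ∫⁻ s, E s / 2 ∂ρ ≤ curveAction Λ Q μ V := by
      calc curveAction Λ Q νf Wf + ∫⁻ s, E s / 2 ∂ρ
          = ∫⁻ s, action Λ Q (νf s) (Wf s) ∂ρ + ∫⁻ s, E s / 2 ∂ρ := by rw [hcurv_eq]
      _ ≤ ∫⁻ s, (action Λ Q (νf s) (Wf s) + E s / 2) ∂ρ := le_lintegral_add _ _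
      _ ≤ ∫⁻ s, action Λ Q (μ s) (V s) ∂ρ := by
            apply lintegral_mono_ae
            filter_upwards [ae_restrict_mem measurableSet_Icc] with s hsmem
            exact hcomp s hsmem
      _ = curveAction Λ Q μ V := hcurv_eq2.symm
    have h2 : Wsq Λ Q μ0 μ1 + ∫⁻ s, E s / 2 ∂ρ ≤ Wsq Λ Q μ0 μ1 :=
      le_trans (add_le_add_left hWle _) (h1.trans_eq hmin)
    have h3 : ∫⁻ s, E s / 2 ∂ρ ≤ 0 := by
      have h4 : Wsq Λ Q μ0 μ1 + ∫⁻ s, E s / 2 ∂ρ ≤ Wsq Λ Q μ0 μ1 + 0 := by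
        simpa using h2
      exact (ENNReal.add_le_add_iff_left hWfin).mp h4
    exact le_antisymm h3 (zero_le)
  -- lower bound on E by H²
  set Qm : ℝ := (∑ x, ∑ y, Q x y) + 1 with hQm
  have hQmpos : 0 < Qm := by
    have h : 0 ≤ ∑ x, ∑ y, Q x y :=
      Finset.sum_nonneg fun x _ => Finset.sum_nonneg fun y _ => hQnn x y
    rw [hQm]; linarith
  have hnpos : 0 < (Sf.card : ℝ) := by
    have : x0 ∈ Sf := (hmemSf x0).mpr hx0X1
    exact_mod_cast Finset.card_pos.mpr ⟨x0, this⟩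
  have hlower : ∀ᵐ s ∂ρ, ENNReal.ofReal ((H s)^2 / ((Sf.card : ℝ) * Qm)) ≤ E s / 2 := by
    filter_upwards [htermfin, hdeadV, ae_restrict_mem measurableSet_Icc] with s hterm hdv hsmem
    have hμnn : ∀ z, 0 ≤ μ s z := (hprob s hsmem).1
    have hμle1 : ∀ z, μ s z ≤ 1 := by
      intro z
      calc μ s z ≤ ∑ x, μ s x := Finset.single_le_sum (fun i _ => hμnn i) (Finset.mem_univ z)
      _ = 1 := (hprob s hsmem).2
    have hQle : ∀ a b, Q a b ≤ Qm := by
      intro a b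
      have h1 : Q a b ≤ ∑ y, Q a y :=
        Finset.single_le_sum (fun i _ => hQnn a i) (Finset.mem_univ b)
      have h2 : (∑ y, Q a y) ≤ ∑ x, ∑ y, Q x y :=
        Finset.single_le_sum (f := fun x => ∑ y, Q x y)
          (fun i _ => Finset.sum_nonneg fun j _ => hQnn i j) (Finset.mem_univ a)
      rw [hQm]; linarith
    have hargle : ∀ a b, μ s a * Q a b ≤ Qm := by
      intro a b
      calc μ s a * Q a b ≤ 1 * Q a b := mul_le_mul_of_nonneg_right (hμle1 a) (hQnn a b)
      _ = Q a b := one_mul _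
      _ ≤ Qm := hQle a b
    have hargnn : ∀ a b, 0 ≤ μ s a * Q a b := fun a b => mul_nonneg (hμnn a) (hQnn a b)
    -- lower bound on E s
    have hlow1 : ∀ z ∈ Sf, ENNReal.ofReal (((V s star z)^2 + (V s z star)^2)/Qm)
        ≤ Afun Λ (μ s star * Q star z) (μ s z * Q z star) (V s star z)
          + Afun Λ (μ s z * Q z star) (μ s star * Q star z) (V s z star) := by
      intro z _
      have l1 := Afun_lower hΛ (V s star z) hQmpos (hargnn star z) (hargnn z star)
        (hargle star z) (hargle z star)
      have l2 := Afun_lower hΛ (V s z star) hQmpos (hargnn z star) (hargnn star z)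
        (hargle z star) (hargle star z)
      have e : ((V s star z)^2 + (V s z star)^2)/Qm = (V s star z)^2/Qm + (V s z star)^2/Qm :=
        add_div _ _ _
      rw [e, ENNReal.ofReal_add (div_nonneg (sq_nonneg _) hQmpos.le)
        (div_nonneg (sq_nonneg _) hQmpos.le)]
      exact add_le_add l1 l2
    have hlowsum : ENNReal.ofReal
        ((∑ z ∈ Sf, ((V s star z)^2 + (V s z star)^2))/Qm) ≤ E s := by
      rw [Finset.sum_div,
        ENNReal.ofReal_sum_of_nonneg (fun z _ => div_nonneg (by positivity) hQmpos.le)]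
      exact Finset.sum_le_sum hlow1
    have hSnn : 0 ≤ ∑ z ∈ Sf, ((V s star z)^2 + (V s z star)^2) :=
      Finset.sum_nonneg fun z _ => by positivity
    -- identity for H
    have hA1 : ∑ z ∈ Sf, ∑ y ∈ Sf, (V s z y - V s y z) = 0 := by
      calc ∑ z ∈ Sf, ∑ y ∈ Sf, (V s z y - V s y z)
          = (∑ z ∈ Sf, ∑ y ∈ Sf, V s z y) - (∑ z ∈ Sf, ∑ y ∈ Sf, V s y z) := by
            rw [← Finset.sum_sub_distrib]
            exact Finset.sum_congr rfl fun z _ => Finset.sum_sub_distrib _ _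
      _ = 0 := by
            rw [Finset.sum_comm (s := Sf) (t := Sf) (f := fun z y => V s y z)]
            exact sub_self _
    have hA2 : ∀ z ∈ Sf, ∑ y ∈ Finset.univ.filter (fun y => ¬ y ∉ X1), (V s z y - V s y z)
        = V s z star - V s star z := by
      intro z hz
      apply Finset.sum_eq_single_of_mem star (by simp [hstar])
      intro y hy hyne
      have hyX1 : y ∈ X1 := by simpa using (Finset.mem_filter.mp hy).2
      have hd := hdv y z hyX1 hyne ((hmemSf z).mp hz)
      rw [hd.1, hd.2, sub_zero]
    have hHs : H s = (1/2) * ∑ z ∈ Sf, (V s z star - V s star z) := by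
      rw [hH]
      simp only
      congr 1
      calc ∑ z ∈ Sf, ∑ y, (V s z y - V s y z)
          = ∑ z ∈ Sf, ((∑ y ∈ Finset.univ.filter (fun y => y ∉ X1), (V s z y - V s y z))
              + ∑ y ∈ Finset.univ.filter (fun y => ¬ y ∉ X1), (V s z y - V s y z)) :=
            Finset.sum_congr rfl fun z _ => (Finset.sum_filter_add_sum_filter_not _ _ _).symm
      _ = (∑ z ∈ Sf, ∑ y ∈ Sf, (V s z y - V s y z))
            + ∑ z ∈ Sf, (V s z star - V s star z) := by
            rw [Finset.sum_add_distrib]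
            congr 1
            exact Finset.sum_congr rfl hA2
      _ = ∑ z ∈ Sf, (V s z star - V s star z) := by rw [hA1, zero_add]
    -- Cauchy–Schwarz
    have c1 : (∑ z ∈ Sf, (V s z star - V s star z))^2
        ≤ (Sf.card : ℝ) * ∑ z ∈ Sf, (V s z star - V s star z)^2 :=
      sq_sum_le_card_mul_sum_sq
    have c2 : (∑ z ∈ Sf, (V s z star - V s star z)^2)
        ≤ 2 * ∑ z ∈ Sf, ((V s star z)^2 + (V s z star)^2) := by
      rw [Finset.mul_sum]
      apply Finset.sum_le_sum
      intro z _
      nlinarith [sq_nonneg (V s z star + V s star z)]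
    have c3 : (Sf.card:ℝ) * (∑ z ∈ Sf, (V s z star - V s star z)^2)
        ≤ (Sf.card:ℝ) * (2 * ∑ z ∈ Sf, ((V s star z)^2 + (V s z star)^2)) :=
      mul_le_mul_of_nonneg_left c2 hnpos.le
    have hCS : (H s)^2 ≤ ((Sf.card : ℝ)/2) * ∑ z ∈ Sf, ((V s star z)^2 + (V s z star)^2) := by
      have he : (H s)^2 = (1/4) * (∑ z ∈ Sf, (V s z star - V s star z))^2 := by
        rw [hHs]; ring
      rw [he]; linarith
    -- combine
    have d1 : (H s)^2/((Sf.card:ℝ)*Qm)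
        ≤ ((∑ z ∈ Sf, ((V s star z)^2 + (V s z star)^2))/Qm)/2 := by
      rw [div_div, div_le_div_iff₀ (mul_pos hnpos hQmpos) (mul_pos hQmpos two_pos)]
      nlinarith [mul_le_mul_of_nonneg_right hCS
        (by linarith [hQmpos] : (0:ℝ) ≤ 2*Qm)]
    calc ENNReal.ofReal ((H s)^2/((Sf.card:ℝ)*Qm))
        ≤ ENNReal.ofReal (((∑ z ∈ Sf, ((V s star z)^2 + (V s z star)^2))/Qm)/2) :=
          ENNReal.ofReal_le_ofReal d1
    _ = ENNReal.ofReal ((∑ z ∈ Sf, ((V s star z)^2 + (V s z star)^2))/Qm) / 2 := by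
          rw [ENNReal.ofReal_div_of_pos two_pos]
          norm_num
    _ ≤ E s / 2 := ENNReal.div_le_div_right hlowsum _
  -- conclude H = 0 a.e.
  have hHzero : ∀ᵐ s ∂ρ, H s = 0 := by
    have hint0 : ∫⁻ s, ENNReal.ofReal ((H s)^2 / ((Sf.card : ℝ) * Qm)) ∂ρ = 0 := by
      apply le_antisymm _ (zero_le)
      rw [← hEzero]
      exact lintegral_mono_ae hlower
    have hHmeas : AEMeasurable H ρ := by
      apply AEMeasurable.const_mul
      apply Finset.aemeasurable_fun_sum
      intro z _
      apply Finset.aemeasurable_fun_sum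
      intro y _
      exact (hVmeas z y).sub (hVmeas y z)
    have haemeas : AEMeasurable (fun s => ENNReal.ofReal ((H s)^2 / ((Sf.card:ℝ) * Qm))) ρ :=
      ENNReal.measurable_ofReal.comp_aemeasurable ((hHmeas.pow_const 2).div_const _)
    have hae := (lintegral_eq_zero_iff' haemeas).mp hint0
    filter_upwards [hae] with s hs
    simp only [Pi.zero_apply, ENNReal.ofReal_eq_zero] at hs
    have hpos : 0 < (Sf.card : ℝ) * Qm := mul_pos hnpos hQmpos
    have h2 : (H s)^2 ≤ 0 := by
      have he : (H s)^2 = ((H s)^2/((Sf.card:ℝ)*Qm))*((Sf.card:ℝ)*Qm) :=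
        (div_mul_cancel₀ _ hpos.ne').symm
      rw [he]
      exact mul_nonpos_of_nonpos_of_nonneg hs hpos.le
    have h3 : (H s)^2 = 0 := le_antisymm h2 (sq_nonneg _)
    exact pow_eq_zero_iff (by norm_num) |>.mp h3
  -- hence no mass in the bad region
  have hmass0 : ∑ z ∈ Sf, μ t0 z = 0 := by
    have hH0 : ∫ s in (0:ℝ)..t0, H s = 0 := by
      have h1 : ∀ᵐ s ∂volume, s ∈ Set.Icc (0:ℝ) 1 → H s = 0 :=
        (ae_restrict_iff' measurableSet_Icc).mp hHzero
      have hae : ∀ᵐ s ∂(volume : Measure ℝ), s ∈ Set.uIoc (0:ℝ) t0 → H s = 0 := by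
        filter_upwards [h1] with s hs hmem
        rw [Set.uIoc_of_le ht0.1] at hmem
        exact hs ⟨hmem.1.le, hmem.2.trans ht0.2⟩
      calc ∫ s in (0:ℝ)..t0, H s = ∫ s in (0:ℝ)..t0, (0:ℝ) :=
            intervalIntegral.integral_congr_ae hae
      _ = 0 := intervalIntegral.integral_zero
    rw [hmass t0 ht0, hH0, neg_zero]
  have hx0Sf : x0 ∈ Sf := (hmemSf x0).mpr hx0X1
  have : μ t0 x0 = 0 := by
    have hnn : ∀ z ∈ Sf, 0 ≤ μ t0 z := fun z _ => (hprob t0 ht0).1 z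
    exact (Finset.sum_eq_zero_iff_of_nonneg hnn).mp hmass0 x0 hx0Sf
  exact hx0 this

end MainTheorem
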